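/- In an information system with witnesses, condition (ALG) holds if and only if condition (SALG) holds, where (SALG) says: for all (i,X) ∈ Con and a ∈ A, if (i,X) ⊢ a then there exists Z ∈ Con(i) with (i,X) ⊢ Z, (i,Z) ⊢ Z, and (i,Z) ⊢ a. -/

import Mathlib

/-- The way-below (approximation) relation in a preorder: `x` approximates `y` if
for every directed set `S` whose least upper bound exists, `y ≤ sup S` implies
`x ≤ u` for some `u ∈ S`. -/
def wayBelow {α : Type*} [Preorder α] (x y : α) : Prop :=
  ∀ S : Set α, DirectedOn (· ≤ ·) S → S.Nonempty →
    ∀ l, IsLUB S l → y ≤ l → ∃ u ∈ S, x ≤ u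

/-- Information system with witnesses (Definition 3.1). -/
structure IWS (A : Type*) where
  Δ : A
  Con : A → Finset A → Prop
  ent : A → Finset A → A → Prop
  entCon : ∀ i X a, ent i X a → Con i X
  ax1 : ∀ i, Con i {i}
  ax2 : ∀ i X Y, Y ⊆ X → Con i X → Con i Y
  ax3 : ∀ i, ent i ∅ Δ
  ax4 : ∀ i X Y, Con i X → (∀ a ∈ Y, ent i X a) → Con i Y
  ax5 : ∀ i X Y a, Con i X → Con i Y → X ⊆ Y → ent i X a → ent i Y a
  ax6 : ∀ i X Y a, Con i X → (∀ b ∈ Y, ent i X b) → ent i Y a → ent i X a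
  ax7 : ∀ i X a, ent i X a → ∃ Z, Con i Z ∧ (∀ z ∈ Z, ent i X z) ∧ ent i Z a
  ax8 : ∀ i X Y, Con i X → (∀ y ∈ Y, ent i X y) → ∃ e, ent i X e ∧ Con e Y
  ax9 : ∀ i j, Con j {i} → ∀ X, Con i X → Con j X
  ax10 : ∀ i j X a, Con j {i} → Con i X → ent i X a → ent j X a
  ax11 : ∀ i j X a, Con j {i} → Con i X → ent j X a → ent i X a

namespace IWS

variable {A : Type*}

/-- A state of an information system with witnesses (Definition 3.5):
finitely consistent, entailment-closed and derivable. -/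
def state (S : IWS A) (x : Set A) : Prop :=
  (∀ F : Finset A, ↑F ⊆ x → ∃ i ∈ x, S.Con i F) ∧
  (∀ i ∈ x, ∀ X : Finset A, ↑X ⊆ x → ∀ a, S.Con i X → S.ent i X a → a ∈ x) ∧
  (∀ a ∈ x, ∃ i ∈ x, ∃ X : Finset A, ↑X ⊆ x ∧ S.Con i X ∧ S.ent i X a)

/-- X-equivalence of witnesses (Definition 5.1). -/
def weq (S : IWS A) (X : Finset A) (i j : A) : Prop :=
  ∃ (n : ℕ) (a k : ℕ → A), a 0 = i ∧ a n = j ∧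
    ∀ ν, 1 ≤ ν → ν ≤ n →
      S.Con (a (ν - 1)) X ∧ S.Con (a ν) X ∧
      S.Con (k ν) {a (ν - 1)} ∧ S.Con (k ν) {a ν}

end IWS

/-- Approximable mappings between information systems with witnesses (Definition 4.1). -/
structure AppMap {A A' : Type*} (S : IWS A) (S' : IWS A') where
  rel : A → Finset A → A' → Prop
  relCon : ∀ i X b, rel i X b → S.Con i X
  am1 : rel S.Δ ∅ S'.Δ
  am2 : ∀ i X X' b, S.Con i X → S.Con i X' → X ⊆ X' → rel i X b → rel i X' b
  am3 : ∀ i X X' b, S.Con i X → (∀ a ∈ X', S.ent i X a) → rel i X' b → rel i X b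
  am4 : ∀ i X b, S.Con i X → rel i X b →
    ∃ U, S.Con i U ∧ (∀ u ∈ U, S.ent i X u) ∧ rel i U b
  am5 : ∀ i X k Y b, S.Con i X → S'.Con k Y → rel i X k → (∀ y ∈ Y, rel i X y) →
    S'.ent k Y b → rel i X b
  am6 : ∀ i X b, S.Con i X → rel i X b →
    ∃ d V, S'.Con d V ∧ rel i X d ∧ (∀ v ∈ V, rel i X v) ∧ S'.ent d V b
  am7 : ∀ i X F, S.Con i X → (∀ c ∈ F, rel i X c) → ∃ e, rel i X e ∧ S'.Con e F
  am8 : ∀ i j X b, S.Con j {i} → S.Con i X → rel i X b → rel j X b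
  am9 : ∀ i j X b, S.Con j {i} → S.Con i X → rel j X b → rel i X b

/-! Given (ALG), apply it to `F = {a}`: the reflexive `(j, V)` it returns is entailed by
`(i, X)`, hence `Con i {j}`, and axioms 9 and 10 move `V` and its entailments from the
witness `j` to `i`. Given (SALG), unions of the sets it provides give one reflexive `Z`
for a whole finite `F`; axiom 8 supplies a witness `e` with `(i, Z) ⊢ e` and `Con e Z`,
and axiom 11 moves the entailments of `(i, Z)` to `(e, Z)`. -/

namespace IWS

variable {A : Type*} (S : IWS A) {i j a : A} {X Y V F : Finset A}

/-- `(i, X) ⊢ Y`. -/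
def EntAll (i : A) (X Y : Finset A) : Prop := ∀ y ∈ Y, S.ent i X y

def ALG : Prop :=
  ∀ i (X F : Finset A), S.Con i X → S.EntAll i X F →
    ∃ j V, S.Con j V ∧ S.ent j V j ∧ S.EntAll j V V ∧
      S.ent i X j ∧ S.EntAll i X V ∧ S.EntAll j V F

def SALG : Prop :=
  ∀ i (X : Finset A) a, S.Con i X → S.ent i X a →
    ∃ Z, S.Con i Z ∧ S.EntAll i X Z ∧ S.EntAll i Z Z ∧ S.ent i Z a

variable {S}

theorem con_singleton_of_ent (h : S.ent i X j) : S.Con i {j} :=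
  S.ax4 i X {j} (S.entCon i X j h) (by simpa using h)

theorem ent_iff_of_con_singleton (hij : S.Con i {j}) (hV : S.Con j V) :
    S.ent i V a ↔ S.ent j V a :=
  ⟨S.ax11 j i V a hij hV, S.ax10 j i V a hij hV⟩

theorem entAll_iff_of_con_singleton (hij : S.Con i {j}) (hV : S.Con j V) :
    S.EntAll i V F ↔ S.EntAll j V F :=
  forall₂_congr fun _ _ => ent_iff_of_con_singleton hij hV

theorem ent_mono (hY : S.Con i Y) (hXY : X ⊆ Y) (h : S.ent i X a) : S.ent i Y a :=
  S.ax5 i X Y a (S.ax2 i Y X hXY hY) hY hXY h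

theorem EntAll.mono (h : S.EntAll i X F) (hY : S.Con i Y) (hXY : X ⊆ Y) : S.EntAll i Y F :=
  fun b hb => ent_mono hY hXY (h b hb)

theorem EntAll.union [DecidableEq A] {G : Finset A} (hF : S.EntAll i X F) (hG : S.EntAll i X G) :
    S.EntAll i X (F ∪ G) :=
  Finset.forall_mem_union.2 ⟨hF, hG⟩

theorem entAll_empty : S.EntAll i X ∅ :=
  fun _ h => absurd h (Finset.notMem_empty _)

theorem entAll_insert [DecidableEq A] :
    S.EntAll i X (insert a F) ↔ S.ent i X a ∧ S.EntAll i X F :=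
  Finset.forall_mem_insert a F _

theorem SALG.exists_reflexive_entAll (hS : S.SALG) (hX : S.Con i X) (hF : S.EntAll i X F) :
    ∃ Z, S.Con i Z ∧ S.EntAll i X Z ∧ S.EntAll i Z Z ∧ S.EntAll i Z F := by
  classical
  induction F using Finset.induction_on with
  | empty =>
    exact ⟨∅, S.ax2 i {i} ∅ (Finset.empty_subset _) (S.ax1 i), entAll_empty, entAll_empty,
      entAll_empty⟩
  | insert a F _ ih =>
    obtain ⟨ha, hF⟩ := entAll_insert.1 hF
    obtain ⟨Z, hZ, hXZ, hZZ, hZF⟩ := ih hF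
    obtain ⟨W, hW, hXW, hWW, hWa⟩ := hS i X a hX ha
    have hXU : S.EntAll i X (Z ∪ W) := hXZ.union hXW
    have hU : S.Con i (Z ∪ W) := S.ax4 i X _ hX hXU
    refine ⟨Z ∪ W, hU, hXU, ?_, entAll_insert.2 ⟨?_, ?_⟩⟩
    · exact (hZZ.mono hU Finset.subset_union_left).union (hWW.mono hU Finset.subset_union_right)
    · exact ent_mono hU Finset.subset_union_right hWa
    · exact hZF.mono hU Finset.subset_union_left

theorem ALG.salg (hS : S.ALG) : S.SALG := by
  intro i X a hX ha
  obtain ⟨j, V, hV, -, hVV, hj, hXV, hVa⟩ := hS i X {a} hX (by simpa [EntAll] using ha)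
  have hij := con_singleton_of_ent hj
  exact ⟨V, S.ax9 j i hij V hV, hXV, (entAll_iff_of_con_singleton hij hV).2 hVV,
    (ent_iff_of_con_singleton hij hV).2 (hVa a (Finset.mem_singleton_self a))⟩

theorem SALG.alg (hS : S.SALG) : S.ALG := by
  intro i X F hX hF
  obtain ⟨Z, hZ, hXZ, hZZ, hZF⟩ := hS.exists_reflexive_entAll hX hF
  obtain ⟨e, hZe, heZ⟩ := S.ax8 i Z Z hZ hZZ
  have hie := con_singleton_of_ent hZe
  exact ⟨e, Z, heZ, (ent_iff_of_con_singleton hie heZ).1 hZe,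
    (entAll_iff_of_con_singleton hie heZ).1 hZZ, S.ax6 i X Z e hX hXZ hZe, hXZ,
    (entAll_iff_of_con_singleton hie heZ).1 hZF⟩

end IWS

/-- Lemma 3.11: condition (ALG) is equivalent to condition (SALG). -/
theorem ALG_iff_SALG {A : Type*} (S : IWS A) :
    (∀ i (X F : Finset A), S.Con i X → (∀ a ∈ F, S.ent i X a) →
      ∃ j V, S.Con j V ∧ S.ent j V j ∧ (∀ v ∈ V, S.ent j V v) ∧
        S.ent i X j ∧ (∀ v ∈ V, S.ent i X v) ∧ ∀ a ∈ F, S.ent j V a) ↔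
    (∀ i (X : Finset A) a, S.Con i X → S.ent i X a →
      ∃ Z, S.Con i Z ∧ (∀ z ∈ Z, S.ent i X z) ∧ (∀ z ∈ Z, S.ent i Z z) ∧
        S.ent i Z a) :=
  ⟨IWS.ALG.salg, IWS.SALG.alg⟩
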